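/- With notation as in the previous lemma, set (Θ_j)_n = (θ_{j+1})_n − (θ_j)_n = (2π)^{−N} Σ_{|n−m|² = j} ψ_m. Then for every l ∈ ℕ there is C_l such that for every k ∈ ℕ and n ∈ ℤ^N: Σ_{j: k ≤ √j < k+1} |(Θ_j)_n|² ≤ C_l (1 + ||n| − k|)^{−l}. -/

import Mathlib

open Real Finset

/-- Euclidean norm of a lattice point `n ∈ ℤ^N`. -/
noncomputable def znorm {N : ℕ} (n : Fin N → ℤ) : ℝ :=
  Real.sqrt (∑ i, ((n i : ℝ)) ^ 2)

/-
On the shell `k² ≤ |n - m|² < (k + 1)²` the reverse triangle inequality gives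
`1 + ||n| - k| ≤ 2 (1 + |m|)`. Decay of `ψ` of order `l + 2N` therefore bounds `|ψ_m|` there by
`2^l (1 + ||n| - k|)^{-l}` times `(1 + |m|)^{-2N}`, which is dominated by the summable weight
`∏ᵢ (1 + |mᵢ|)^{-2}`. This bounds `Σ_j |(Θ_j)_n|`, and the sum of squares is at most the square
of the sum.
-/

theorem summable_pi_fin_prod {α : Type*} {f : α → ℝ} (hf₀ : ∀ a, 0 ≤ f a) (hf : Summable f) :
    ∀ N : ℕ, Summable fun m : Fin N → α => ∏ i, f (m i)
  | 0 => .of_finite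
  | N + 1 => by
    rw [← (Fin.consEquiv fun _ : Fin (N + 1) => α).summable_iff]
    refine (hf.mul_of_nonneg (summable_pi_fin_prod hf₀ hf N) hf₀
      fun m => prod_nonneg fun i _ => hf₀ _).congr fun p => ?_
    simp [Fin.prod_univ_succ]

theorem summable_inv_one_add_abs_sq : Summable fun z : ℤ => ((1 + |(z : ℝ)|) ^ 2)⁻¹ := by
  refine .of_norm_bounded_eventually (summable_one_div_int_pow.mpr one_lt_two) ?_
  filter_upwards [Filter.eventually_cofinite_ne 0] with z hz
  have hz : (0 : ℝ) < |(z : ℝ)| := by positivity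
  rw [norm_inv, norm_pow, Real.norm_of_nonneg (by positivity), ← sq_abs (z : ℝ), one_div]
  gcongr
  linarith

theorem rpow_neg_le_two_rpow_mul_rpow_neg {u v t : ℝ} (hu : 0 < u) (huv : u ≤ 2 * v)
    (ht : 0 ≤ t) : v ^ (-t) ≤ 2 ^ t * u ^ (-t) := by
  have hv : 0 ≤ v := by linarith
  calc v ^ (-t) = 2 ^ t * (2 * v) ^ (-t) := by
        rw [Real.mul_rpow zero_le_two hv, ← mul_assoc, Real.rpow_neg zero_le_two,
          mul_inv_cancel₀ (by positivity), one_mul]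
    _ ≤ 2 ^ t * u ^ (-t) := mul_le_mul_of_nonneg_left
        (Real.rpow_le_rpow_of_nonpos hu huv (neg_nonpos.mpr ht)) (by positivity)

theorem sum_norm_tsum_ite_eq_le {α β E : Type*} [NormedAddCommGroup E] [DecidableEq β]
    {f : α → E} (hf : Summable fun a => ‖f a‖) (s : α → β) (J : Finset β) :
    ∑ j ∈ J, ‖∑' a, if s a = j then f a else 0‖ ≤ ∑' a, if s a ∈ J then ‖f a‖ else 0 := by
  have hnorm : ∀ j a, ‖if s a = j then f a else 0‖ = if s a = j then ‖f a‖ else 0 :=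
    fun j a => by split_ifs <;> simp
  have hsummable : ∀ j, Summable fun a => ‖if s a = j then f a else 0‖ := fun j =>
    hf.of_nonneg_of_le (fun _ => norm_nonneg _) fun a => by
      rw [hnorm]; split_ifs <;> simp
  calc ∑ j ∈ J, ‖∑' a, if s a = j then f a else 0‖
      ≤ ∑ j ∈ J, ∑' a, ‖if s a = j then f a else 0‖ :=
        sum_le_sum fun j _ => norm_tsum_le_tsum_norm (hsummable j)
    _ = ∑' a, ∑ j ∈ J, ‖if s a = j then f a else 0‖ :=
        (Summable.tsum_finsetSum fun j _ => hsummable j).symm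
    _ = ∑' a, if s a ∈ J then ‖f a‖ else 0 := by
        simp only [hnorm, sum_ite_eq]

theorem map_castEmbedding_Ico (a b : ℕ) :
    (Ico a b).map Nat.castEmbedding = Ico (a : ℤ) b := by
  ext z
  simp only [mem_map, mem_Ico, Nat.castEmbedding_apply]
  constructor
  · rintro ⟨j, hj, rfl⟩
    omega
  · exact fun hz => ⟨z.toNat, by omega, by omega⟩

section Lattice

variable {N : ℕ}

theorem znorm_eq_norm (n : Fin N → ℤ) :
    znorm n = ‖WithLp.toLp 2 (fun i => (n i : ℝ))‖ := by
  simp [znorm, EuclideanSpace.norm_eq, sq_abs]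

theorem znorm_nonneg (n : Fin N → ℤ) : 0 ≤ znorm n := Real.sqrt_nonneg _

theorem abs_le_znorm (n : Fin N → ℤ) (i : Fin N) : |(n i : ℝ)| ≤ znorm n := by
  rw [znorm, ← Real.sqrt_sq_eq_abs]
  exact Real.sqrt_le_sqrt <|
    single_le_sum (f := fun j => ((n j : ℝ)) ^ 2) (fun j _ => sq_nonneg _) (mem_univ i)

theorem abs_znorm_sub_znorm_sub_le (n m : Fin N → ℤ) : |znorm n - znorm (n - m)| ≤ znorm m := by
  have h := abs_norm_sub_norm_le
    (WithLp.toLp 2 (fun i => (n i : ℝ))) (WithLp.toLp 2 (fun i => ((n - m) i : ℝ)))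
  rwa [← WithLp.toLp_sub, show ((fun i => (n i : ℝ)) - fun i => ((n - m) i : ℝ)) =
    fun i => (m i : ℝ) by ext i; simp, ← znorm_eq_norm, ← znorm_eq_norm, ← znorm_eq_norm] at h

theorem znorm_mem_Icc_of_sum_sq_mem {d : Fin N → ℤ} {k : ℕ}
    (h : ∑ i, d i ^ 2 ∈ Ico ((k : ℤ) ^ 2) ((k + 1) ^ 2)) :
    znorm d ∈ Set.Icc (k : ℝ) (k + 1) := by
  rw [mem_Ico] at h
  rw [znorm, Set.mem_Icc, Real.le_sqrt (by positivity) (by positivity),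
    Real.sqrt_le_left (by positivity)]
  exact ⟨by exact_mod_cast h.1, by exact_mod_cast h.2.le⟩

theorem one_add_abs_znorm_sub_le {n m : Fin N → ℤ} {k : ℕ}
    (h : znorm (n - m) ∈ Set.Icc (k : ℝ) (k + 1)) : 1 + |znorm n - k| ≤ 2 * (1 + znorm m) := by
  have hshell : |znorm (n - m) - k| ≤ 1 := abs_le.mpr ⟨by linarith [h.1], by linarith [h.2]⟩
  linarith [abs_sub_le (znorm n) (znorm (n - m)) k, abs_znorm_sub_znorm_sub_le n m,
    znorm_nonneg m]

noncomputable def latticeWeight (m : Fin N → ℤ) : ℝ := ∏ i, ((1 + |(m i : ℝ)|) ^ 2)⁻¹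

theorem summable_latticeWeight : Summable (latticeWeight (N := N)) :=
  summable_pi_fin_prod (fun _ => by positivity) summable_inv_one_add_abs_sq N

theorem one_add_znorm_rpow_le_latticeWeight (m : Fin N → ℤ) :
    (1 + znorm m) ^ (-(2 * N : ℝ)) ≤ latticeWeight m := by
  have hm := znorm_nonneg m
  have hcoord : ∏ i, (1 + |(m i : ℝ)|) ^ 2 ≤ (1 + znorm m) ^ (2 * N) := by
    calc ∏ i, (1 + |(m i : ℝ)|) ^ 2 ≤ ∏ _i : Fin N, (1 + znorm m) ^ 2 :=
          prod_le_prod (fun i _ => by positivity) fun i _ => by gcongr; exact abs_le_znorm m i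
      _ = (1 + znorm m) ^ (2 * N) := by simp [← pow_mul]
  rw [latticeWeight, prod_inv_distrib, Real.rpow_neg (by positivity)]
  exact_mod_cast inv_anti₀ (prod_pos fun i _ => by positivity) hcoord

end Lattice

theorem tsum_shell_norm_le {N l : ℕ} {ψ : (Fin N → ℤ) → ℂ} {c : ℝ}
    (hc : ∀ m, ‖ψ m‖ ≤ c * (1 + znorm m) ^ (-((l + 2 * N : ℕ) : ℝ))) (k : ℕ) (n : Fin N → ℤ) :
    ∑' m, (if ∑ i, (n i - m i) ^ 2 ∈ Ico ((k : ℤ) ^ 2) ((k + 1) ^ 2) then ‖ψ m‖ else 0) ≤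
      c * 2 ^ (l : ℝ) * (1 + |znorm n - k|) ^ (-(l : ℝ)) * ∑' m : Fin N → ℤ, latticeWeight m := by
  set K := c * 2 ^ (l : ℝ) * (1 + |znorm n - k|) ^ (-(l : ℝ))
  have hc₀ : 0 ≤ c := nonneg_of_mul_nonneg_left ((norm_nonneg _).trans (hc 0))
    (Real.rpow_pos_of_pos (by linarith [znorm_nonneg (0 : Fin N → ℤ)]) _)
  have hw₀ : ∀ m, 0 ≤ latticeWeight (N := N) m := fun m => by
    unfold latticeWeight; positivity
  have hpointwise : ∀ m, (if ∑ i, (n i - m i) ^ 2 ∈ Ico ((k : ℤ) ^ 2) ((k + 1) ^ 2)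
      then ‖ψ m‖ else 0) ≤ K * latticeWeight m := by
    intro m
    split_ifs with hshell
    · have hm := znorm_nonneg m
      have hnear := one_add_abs_znorm_sub_le (znorm_mem_Icc_of_sum_sq_mem (d := n - m) hshell)
      calc ‖ψ m‖ ≤ c * ((1 + znorm m) ^ (-(l : ℝ)) * (1 + znorm m) ^ (-(2 * N : ℝ))) := by
            rw [← Real.rpow_add (by positivity), ← neg_add]; push_cast at hc; exact hc m
        _ ≤ c * ((2 ^ (l : ℝ) * (1 + |znorm n - k|) ^ (-(l : ℝ))) * latticeWeight m) := by
            gcongr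
            · exact rpow_neg_le_two_rpow_mul_rpow_neg (by positivity) hnear (by positivity)
            · exact one_add_znorm_rpow_le_latticeWeight m
        _ = K * latticeWeight m := by ring
    · exact mul_nonneg (by positivity) (hw₀ m)
  calc _ ≤ ∑' m, K * latticeWeight m :=
        Summable.tsum_le_tsum hpointwise
          ((summable_latticeWeight.mul_left K).of_nonneg_of_le
            (fun m => by split_ifs <;> positivity) hpointwise)
          (summable_latticeWeight.mul_left K)
    _ = _ := tsum_mul_left

theorem stmt5_general (N : ℕ) (ψc : (Fin N → ℤ) → ℂ)
    (hdecay : ∀ q : ℕ, ∃ c : ℝ, ∀ m, ‖ψc m‖ ≤ c * (1 + znorm m) ^ (-(q : ℝ)))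
    (hsum : Summable ψc)
    (Θ : ℕ → (Fin N → ℤ) → ℂ)
    (hΘ : ∀ j n, Θ j n =
      ((2 * π : ℝ) ^ (-(N : ℝ)) : ℝ) *
        ∑' m : Fin N → ℤ, if (∑ i, (n i - m i) ^ 2 : ℤ) = (j : ℤ) then ψc m else 0) :
    ∀ l : ℕ, ∃ C : ℝ, ∀ (k : ℕ) (n : Fin N → ℤ),
      ∑ j ∈ Finset.Ico (k ^ 2) ((k + 1) ^ 2), ‖Θ j n‖ ^ 2 ≤
        C * (1 + |znorm n - k|) ^ (-(l : ℝ)) := by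
  intro l
  obtain ⟨c, hc⟩ := hdecay (l + 2 * N)
  set ρ : ℝ := (2 * π) ^ (-(N : ℝ))
  set C := ρ * c * 2 ^ (l : ℝ) * ∑' m, latticeWeight m
  refine ⟨C ^ 2, fun k n => ?_⟩
  set x := (1 + |znorm n - k|) ^ (-(l : ℝ))
  have hρ : 0 ≤ ρ := by positivity
  have hx₀ : 0 ≤ x := by positivity
  have hx₁ : x ≤ 1 := Real.rpow_le_one_of_one_le_of_nonpos (by simp) (by simp)
  have hsum_norm : ∑ j ∈ Ico (k ^ 2) ((k + 1) ^ 2), ‖Θ j n‖ ≤ C * x := by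
    calc ∑ j ∈ Ico (k ^ 2) ((k + 1) ^ 2), ‖Θ j n‖
        = ρ * ∑ j ∈ Ico ((k : ℤ) ^ 2) ((k + 1) ^ 2),
            ‖∑' m : Fin N → ℤ, if ∑ i, (n i - m i) ^ 2 = j then ψc m else 0‖ := by
          have hIco := map_castEmbedding_Ico (k ^ 2) ((k + 1) ^ 2)
          push_cast at hIco
          simp [← hIco, sum_map, hΘ, mul_sum, abs_of_nonneg hρ]
      _ ≤ ρ * ∑' m, (if ∑ i, (n i - m i) ^ 2 ∈ Ico ((k : ℤ) ^ 2) ((k + 1) ^ 2)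
            then ‖ψc m‖ else 0) := by
          gcongr; exact sum_norm_tsum_ite_eq_le hsum.norm _ _
      _ ≤ ρ * (c * 2 ^ (l : ℝ) * x * ∑' m, latticeWeight m) := by
          gcongr; exact tsum_shell_norm_le (by exact_mod_cast hc) k n
      _ = C * x := by ring
  calc ∑ j ∈ Ico (k ^ 2) ((k + 1) ^ 2), ‖Θ j n‖ ^ 2
      ≤ (∑ j ∈ Ico (k ^ 2) ((k + 1) ^ 2), ‖Θ j n‖) ^ 2 :=
        sum_sq_le_sq_sum_of_nonneg fun _ _ => norm_nonneg _
    _ ≤ (C * x) ^ 2 := by gcongr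
    _ = C ^ 2 * x ^ 2 := mul_pow _ _ _
    _ ≤ C ^ 2 * x := by gcongr; exact pow_le_of_le_one hx₀ hx₁ two_ne_zero

/-- With `(Θ_j)_n = (2π)^{-N} Σ_{|n-m|²=j} ψ_m` and `|ψ_m| ≤ c_q (1+|m|)^{-q}` for all `q`,
for every `l` there is `C_l` such that for every `k ∈ ℕ`, `n ∈ ℤ^N`:
`Σ_{j : k ≤ √j < k+1} |(Θ_j)_n|² ≤ C_l (1+||n|-k|)^{-l}`.  The range `k ≤ √j < k+1`
is exactly `k² ≤ j < (k+1)²`. -/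
theorem stmt5 (N : ℕ) (hN : 1 ≤ N) (ψc : (Fin N → ℤ) → ℂ)
    (hdecay : ∀ q : ℕ, ∃ c : ℝ, ∀ m, ‖ψc m‖ ≤ c * (1 + znorm m) ^ (-(q : ℝ)))
    (hsum : Summable ψc)
    (Θ : ℕ → (Fin N → ℤ) → ℂ)
    (hΘ : ∀ j n, Θ j n =
      ((2 * π : ℝ) ^ (-(N : ℝ)) : ℝ) *
        ∑' m : Fin N → ℤ, if (∑ i, (n i - m i) ^ 2 : ℤ) = (j : ℤ) then ψc m else 0) :
    ∀ l : ℕ, ∃ C : ℝ, ∀ (k : ℕ) (n : Fin N → ℤ),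
      ∑ j ∈ Finset.Ico (k ^ 2) ((k + 1) ^ 2), ‖Θ j n‖ ^ 2 ≤
        C * (1 + |znorm n - k|) ^ (-(l : ℝ)) :=
  stmt5_general N ψc hdecay hsum Θ hΘ
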